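/- Let $p:\widetilde M\twoheadrightarrow M$ be a geodesic covering. If $(M,\nabla)$ is nonreturning, then so is $(\widetilde M,\widetilde\nabla)$. -/

import Mathlib

/-- An abstract structure recording the geodesics of a manifold with linear connection;
geodesics of a manifold with linear connection are continuous curves. -/
structure GeodesicStructure (M : Type*) [TopologicalSpace M] where
  IsGeodesic : (ℝ → M) → Prop
  continuous_of_isGeodesic : ∀ γ, IsGeodesic γ → Continuous γ

/-- `(M,∇)` is nonreturning iff each point has arbitrarily small open neighborhoods `U`
such that no geodesic which leaves `U` ever returns to `U`. -/
def GeodesicStructure.Nonreturning {M : Type*} [TopologicalSpace M]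
    (G : GeodesicStructure M) : Prop :=
  ∀ x : M, ∀ V ∈ nhds x, ∃ U ∈ nhds x, IsOpen U ∧ U ⊆ V ∧
    ∀ γ : ℝ → M, G.IsGeodesic γ → ∀ t₁ t₂ t₃ : ℝ, t₁ ≤ t₂ → t₂ ≤ t₃ →
      γ t₁ ∈ U → γ t₂ ∉ U → γ t₃ ∉ U

/-- A geodesic covering: a (surjective) covering map which projects geodesics of the
covering space onto geodesics of the base, and along which every geodesic of the
base lifts to a geodesic of the covering space through any point of the fiber. -/
def IsGeodesicCovering {M' M : Type*} [TopologicalSpace M'] [TopologicalSpace M]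
    (p : M' → M) (G' : GeodesicStructure M') (G : GeodesicStructure M) : Prop :=
  IsCoveringMap p ∧ Function.Surjective p ∧
    (∀ γ : ℝ → M', G'.IsGeodesic γ → G.IsGeodesic (p ∘ γ)) ∧
    (∀ γ : ℝ → M, G.IsGeodesic γ → ∀ x : M', p x = γ 0 →
      ∃ γ' : ℝ → M', G'.IsGeodesic γ' ∧ p ∘ γ' = γ ∧ γ' 0 = x)

/-- If the base of a geodesic covering is nonreturning, then so is the covering space. -/
theorem nonreturning_of_geodesic_covering {M' M : Type*} [TopologicalSpace M']
    [TopologicalSpace M] (p : M' → M)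
    (G' : GeodesicStructure M') (G : GeodesicStructure M)
    (hcov : IsGeodesicCovering p G' G)
    (hM : G.Nonreturning) : G'.Nonreturning := by
  intro x' V' hV'
  haveI : Nonempty (p ⁻¹' {p x'}) := ⟨⟨x', rfl⟩⟩
  obtain ⟨hdisc, t, hxt⟩ : DiscreteTopology (p ⁻¹' {p x'}) ∧
      ∃ t : Bundle.Trivialization (p ⁻¹' {p x'}) p, p x' ∈ t.baseSet :=
    ⟨(hcov.1 (p x')).1, _, (hcov.1 (p x')).mem_toTrivialization_baseSet⟩
  obtain ⟨O, hOV, hOopen, hxO⟩ := mem_nhds_iff.mp hV'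
  -- the sheet through x'
  set c : p ⁻¹' {p x'} := (t x').2 with hc
  set S : Set M' := t.source ∩ (Prod.snd ∘ t) ⁻¹' {c} with hS
  have hSopen : IsOpen S :=
    t.continuousOn_toFun.isOpen_inter_preimage t.open_source
      (continuous_snd.isOpen_preimage _ <| isOpen_discrete _)
  have hx'src : x' ∈ t.source := t.mem_source.mpr hxt
  have hx'S : x' ∈ S := ⟨hx'src, rfl⟩
  -- p is injective on S
  have hinj : Set.InjOn p S := by
    intro y hy z hz hyz
    refine t.injOn hy.1 hz.1 (Prod.ext ?_ (hy.2.trans hz.2.symm))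
    rw [t.proj_toFun y hy.1, t.proj_toFun z hz.1, hyz]
  set W : Set M' := S ∩ O with hW
  have hWopen : IsOpen W := hSopen.inter hOopen
  have hx'W : x' ∈ W := ⟨hx'S, hxO⟩
  have hpW : p '' W ∈ nhds (p x') :=
    (hcov.1.isOpenMap W hWopen).mem_nhds ⟨x', hx'W, rfl⟩
  obtain ⟨U, hUnhds, hUopen, hUsub, hUnr⟩ := hM (p x') (p '' W) hpW
  set U' : Set M' := S ∩ p ⁻¹' U with hU'
  have hU'open : IsOpen U' := hSopen.inter (hUopen.preimage hcov.1.continuous)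
  have hx'U' : x' ∈ U' := ⟨hx'S, Set.mem_preimage.mpr (mem_of_mem_nhds hUnhds)⟩
  -- U' ⊆ W (hence ⊆ V')
  have hU'W : U' ⊆ W := by
    rintro y ⟨hyS, hyU⟩
    obtain ⟨w, hwW, hwp⟩ := hUsub hyU
    rwa [hinj hwW.1 hyS hwp] at hwW
  have hUbase : U ⊆ t.baseSet := by
    intro u hu
    obtain ⟨w, hwW, hwp⟩ := hUsub hu
    rw [← hwp]
    exact t.mem_source.mp hwW.1.1
  refine ⟨U', hU'open.mem_nhds hx'U', hU'open, fun y hy => hOV (hU'W hy).2, ?_⟩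
  intro γ' hγ' t₁ t₂ t₃ h12 h23 h1 h2
  intro h3
  apply h2
  have hγ : G.IsGeodesic (p ∘ γ') := hcov.2.2.1 γ' hγ'
  -- p ∘ γ' stays in U on [t₁, t₃]
  have hstay : ∀ s ∈ Set.Icc t₁ t₃, p (γ' s) ∈ U := by
    intro s hs
    by_contra hns
    exact hUnr (p ∘ γ') hγ t₁ s t₃ hs.1 hs.2 h1.2 hns h3.2
  -- hence γ' stays in t.source on [t₁, t₃]
  have hsrc : ∀ s ∈ Set.Icc t₁ t₃, γ' s ∈ t.source := fun s hs =>
    t.mem_source.mpr (hUbase (hstay s hs))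
  -- the sheet index is constant on [t₁, t₃]
  have hcont : ContinuousOn (fun s => (t (γ' s)).2) (Set.Icc t₁ t₃) := by
    refine continuous_snd.comp_continuousOn ?_
    exact t.continuousOn_toFun.comp (G'.continuous_of_isGeodesic γ' hγ').continuousOn hsrc
  have hconst : (t (γ' t₂)).2 = (t (γ' t₁)).2 :=
    isPreconnected_Icc.constant hcont ⟨h12, h23⟩ ⟨le_refl t₁, h12.trans h23⟩
  exact ⟨⟨hsrc t₂ ⟨h12, h23⟩, hconst.trans h1.1.2⟩, hstay t₂ ⟨h12, h23⟩⟩
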